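/- arXiv:1310.1309 — 7 statements merged into one kernel-verified Lean document; each statement's English description precedes it below -/
import Mathlib

section
/- Let α be a type and F = FreeGroup α. Let h = (z, f) ∈ ℤ × F with f ≠ 1. Then the centralizer of h in ℤ × F is commutative: any two elements of ℤ × F that each commute with h commute with each other. -/
/-!
Since `ℤ` is abelian only the second coordinates matter. The centralizer of `f ≠ 1` in a free
group is free (Nielsen–Schreier) and has `f` as a nontrivial central element. In a free group,
commuting with a generator `of j` forces every letter of the reduced word to be `j` or `j⁻¹`, so a
nontrivial central element rules out two distinct generators, and a free group on at most one
generator is abelian.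
-/

theorem List.forall_mem_eq_of_cons_eq_append {α : Type*} {a : α} {l : List α}
    (h : a :: l = l ++ [a]) : ∀ b ∈ l, b = a := by
  have : Nonempty α := ⟨a⟩
  have hrot : (a :: l).rotate 1 = a :: l := by rw [List.rotate_cons_succ, List.rotate_zero, h]
  obtain ⟨c, hc⟩ := List.rotate_one_eq_self_iff_eq_replicate.mp hrot
  have hca : a = c := List.eq_of_mem_replicate (hc ▸ List.mem_cons_self)
  intro b hb
  rw [hca]
  exact List.eq_of_mem_replicate (hc ▸ List.mem_cons_of_mem a hb)

namespace FreeGroup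

variable {α : Type*}

theorem toWord_mk_singleton_mul [DecidableEq α] {x : α × Bool} {w : FreeGroup α}
    (h : w.toWord.head? ≠ some (x.1, !x.2)) : (mk [x] * w).toWord = x :: w.toWord := by
  rw [toWord_mul, toWord_mk, reduce_singleton, List.singleton_append, reduce.cons, reduce_toWord]
  rcases hw : w.toWord with _ | ⟨y, L⟩
  · rfl
  · rw [hw] at h
    have : ¬(x.1 = y.1 ∧ x.2 = !y.2) := by
      rintro ⟨h1, h2⟩
      exact h (by simp [h1, h2])
    simp [this]

theorem cons_toWord_eq_toWord_append_of_commute [DecidableEq α] {x : α × Bool} {w : FreeGroup α}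
    (hc : Commute w (mk [x])) (h : w.toWord.head? ≠ some (x.1, !x.2)) :
    x :: w.toWord = w.toWord ++ [x] := by
  -- the word of `w * mk [x] = mk [x] * w` is `x :: w.toWord`, a sublist of `w.toWord ++ [x]`
  -- of full length
  have hsub : List.Sublist (w * mk [x]).toWord (w.toWord ++ [x]) := by
    simpa [toWord_mk] using toWord_mul_sublist w (mk [x])
  rw [hc.eq, toWord_mk_singleton_mul h] at hsub
  exact hsub.eq_of_length (by simp)

theorem fst_eq_of_mem_toWord_of_commute_of [DecidableEq α] {w : FreeGroup α} {j : α}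
    (h : Commute w (of j)) {a : α × Bool} (ha : a ∈ w.toWord) : a.1 = j := by
  obtain ⟨x, rfl, hx, hhead⟩ : ∃ x : α × Bool, x.1 = j ∧ Commute w (mk [x]) ∧
      w.toWord.head? ≠ some (x.1, !x.2) := by
    by_cases hw : w.toWord.head? = some (j, false)
    · exact ⟨(j, false), rfl, show Commute w (of j)⁻¹ from h.inv_right, by simp [hw]⟩
    · exact ⟨(j, true), rfl, h, hw⟩
  rw [List.forall_mem_eq_of_cons_eq_append (cons_toWord_eq_toWord_append_of_commute hx hhead) a ha]

theorem eq_one_of_commute_of_of_ne {w : FreeGroup α} {i k : α} (hik : i ≠ k)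
    (hi : Commute w (of i)) (hk : Commute w (of k)) : w = 1 := by
  classical
  by_contra hw
  obtain ⟨a, ha⟩ := List.exists_mem_of_ne_nil _ (mt toWord_eq_nil_iff.mp hw)
  exact hik ((fst_eq_of_mem_toWord_of_commute_of hi ha).symm.trans
    (fst_eq_of_mem_toWord_of_commute_of hk ha))

theorem commute_of_forall_commute_of_ne_one {f : FreeGroup α} (hf : f ≠ 1)
    (hc : ∀ g, Commute g f) (a b : FreeGroup α) : Commute a b := by
  have : IsMulCommutative (Subgroup.closure (Set.range (of : α → FreeGroup α))) := by
    refine Subgroup.isMulCommutative_closure ?_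
    rintro _ ⟨i, rfl⟩ _ ⟨k, rfl⟩
    obtain rfl : i = k := by_contra fun hik =>
      hf (eq_one_of_commute_of_of_ne hik (hc _).symm (hc _).symm)
    rfl
  have hmem : ∀ g : FreeGroup α, g ∈ Subgroup.closure (Set.range of) := by
    simp [closure_range_of]
  exact setLike_mul_comm (hmem a) (hmem b)

end FreeGroup

namespace IsFreeGroup

variable {G : Type*} [Group G] [IsFreeGroup G]

theorem commute_of_forall_commute_of_ne_one {f : G} (hf : f ≠ 1) (hc : ∀ g, Commute g f)
    (a b : G) : Commute a b := by
  let e := toFreeGroup G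
  refine (commute_map_iff e.injective).mp <|
    FreeGroup.commute_of_forall_commute_of_ne_one (f := e f) (by simpa using hf) (fun g => ?_) _ _
  simpa using (hc (e.symm g)).map e

theorem commute_of_commute_of_ne_one {f a b : G} (hf : f ≠ 1)
    (ha : Commute a f) (hb : Commute b f) : Commute a b := by
  let C := Subgroup.centralizer {f}
  have mem {c : G} (hc : Commute c f) : c ∈ C :=
    Subgroup.mem_centralizer_singleton_iff.mpr hc.eq
  -- `C` is free by Nielsen–Schreier (the instance `subgroupIsFreeOfIsFree`)
  have hC : Commute (⟨a, mem ha⟩ : C) ⟨b, mem hb⟩ :=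
    commute_of_forall_commute_of_ne_one (f := ⟨f, mem (.refl f)⟩) (by simpa using hf)
      (fun g => Subtype.ext (Subgroup.mem_centralizer_singleton_iff.mp g.2)) _ _
  exact congrArg Subtype.val hC

end IsFreeGroup

/-- Let `F = FreeGroup α` and `h = (z, f) ∈ ℤ × F` with `f ≠ 1`. Then the
centralizer of `h` in `ℤ × F` is commutative: any two elements of `ℤ × F`
that each commute with `h` commute with each other. -/
theorem centralizer_commutative_of_snd_ne_one {α : Type*} (z : ℤ) (f : FreeGroup α)
    (hf : f ≠ 1) (x y : Multiplicative ℤ × FreeGroup α)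
    (hx : Commute x (Multiplicative.ofAdd z, f))
    (hy : Commute y (Multiplicative.ofAdd z, f)) :
    Commute x y :=
  .prod (.all _ _) <| IsFreeGroup.commute_of_commute_of_ne_one hf
    (Prod.commute_iff.mp hx).2 (Prod.commute_iff.mp hy).2
end

section
/- Let F = FreeGroup α be the free group on a type α having two distinct elements (so F is non-abelian), and let H' be a finite-index subgroup of H = ℤ × F. Then an element h = (z, f) ∈ H' commutes with every element of H' if and only if f = 1; that is, the center of H' equals H' ∩ (ℤ × {1}). -/
open Subgroup

/-- In a free group, the `t`-exponent-sum homomorphism. -/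
private def expSum {α : Type*} [DecidableEq α] (t : α) :
    FreeGroup α →* Multiplicative ℤ :=
  FreeGroup.lift (fun s => if s = t then Multiplicative.ofAdd (1 : ℤ) else 1)

private lemma expSum_of_self {α : Type*} [DecidableEq α] (t : α) :
    expSum t (FreeGroup.of t) = Multiplicative.ofAdd (1 : ℤ) := by
  simp [expSum]

private lemma expSum_of_ne {α : Type*} [DecidableEq α] {s t : α} (h : s ≠ t) :
    expSum t (FreeGroup.of s) = 1 := by
  simp [expSum, h]

private lemma of_zpow_eq_one {α : Type*} {t : α} {n : ℤ}
    (h : FreeGroup.of t ^ n = 1) : n = 0 := by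
  classical
  have h1 : (expSum t) (FreeGroup.of t ^ n) = 1 := by rw [h, (expSum t).map_one]
  rw [map_zpow, expSum_of_self] at h1
  have h2 : Multiplicative.toAdd (Multiplicative.ofAdd (1 : ℤ) ^ n) = 0 := by rw [h1]; rfl
  simpa using h2

private lemma of_zpow_ne {α : Type*} {s t : α} (hst : s ≠ t) {m n : ℤ}
    (h : FreeGroup.of s ^ m = FreeGroup.of t ^ n) : m = 0 := by
  classical
  have h1 : (expSum s) (FreeGroup.of s ^ m) = 1 := by
    rw [h, map_zpow, expSum_of_ne (Ne.symm hst), one_zpow]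
  rw [map_zpow, expSum_of_self] at h1
  have h2 : Multiplicative.toAdd (Multiplicative.ofAdd (1 : ℤ) ^ m) = 0 := by rw [h1]; rfl
  simpa using h2

/-- Two commuting elements of a free group are powers of a common element. -/
private lemma commute_exists_zpow {β : Type*} {u v : FreeGroup β}
    (h : Commute u v) : ∃ c : FreeGroup β, ∃ i j : ℤ, u = c ^ i ∧ v = c ^ j := by
  classical
  set H : Subgroup (FreeGroup β) := Subgroup.closure {u, v} with hH
  have hu : u ∈ H := Subgroup.subset_closure (by simp)
  have hv : v ∈ H := Subgroup.subset_closure (by simp)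
  -- every two elements of H commute
  have hstep : H ≤ Subgroup.centralizer {u, v} := by
    rw [Subgroup.closure_le]
    rintro x (rfl | rfl) <;>
      · rw [SetLike.mem_coe, Subgroup.mem_centralizer_iff]
        rintro g (rfl | rfl) <;> simp [h.eq]
  have hcomm : ∀ p ∈ H, ∀ q ∈ H, p * q = q * p := by
    intro p hp q hq
    have h1 : H ≤ Subgroup.centralizer {p} := by
      rw [Subgroup.closure_le]
      rintro x (rfl | rfl) <;>
        · rw [SetLike.mem_coe, Subgroup.mem_centralizer_iff]
          rintro g rfl
          exact (Subgroup.mem_centralizer_iff.mp (hstep hp) _ (by simp)).symm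
    exact Subgroup.mem_centralizer_iff.mp (h1 hq) p rfl
  -- H is a free group (Nielsen–Schreier), and a commutative free group is cyclic
  let e := IsFreeGroup.toFreeGroup H
  set X := IsFreeGroup.Generators H with hX
  have hcommX : ∀ w₁ w₂ : FreeGroup X, w₁ * w₂ = w₂ * w₁ := by
    intro w₁ w₂
    apply e.symm.injective
    rw [map_mul, map_mul]
    exact Subtype.ext (hcomm _ (e.symm w₁).2 _ (e.symm w₂).2)
  have hsub : Subsingleton X := by
    constructor
    intro x y
    by_contra hxy
    let g : X → Equiv.Perm (Fin 3) := fun z =>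
      if z = x then Equiv.swap 0 1 else Equiv.swap 1 2
    have := congrArg (FreeGroup.lift g) (hcommX (FreeGroup.of x) (FreeGroup.of y))
    rw [map_mul, map_mul, FreeGroup.lift_apply_of, FreeGroup.lift_apply_of] at this
    simp only [g, if_pos rfl, if_neg (Ne.symm hxy)] at this
    exact absurd this (by decide)
  rcases isEmpty_or_nonempty X with hE | ⟨⟨x⟩⟩
  · -- trivial case: H is trivial
    have htriv : ∀ w : FreeGroup X, w = 1 := by
      have : (MonoidHom.id (FreeGroup X)) = 1 :=
        FreeGroup.ext_hom _ _ (fun a => isEmptyElim a)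
      intro w
      calc w = MonoidHom.id (FreeGroup X) w := rfl
        _ = (1 : FreeGroup X →* FreeGroup X) w := by rw [this]
        _ = 1 := rfl
    refine ⟨1, 0, 0, ?_, ?_⟩
    · have : (⟨u, hu⟩ : H) = 1 := by
        have := htriv (e ⟨u, hu⟩)
        calc (⟨u, hu⟩ : H) = e.symm (e ⟨u, hu⟩) := (e.symm_apply_apply _).symm
          _ = e.symm 1 := by rw [this]
          _ = 1 := map_one _
      simpa using congrArg Subtype.val this
    · have : (⟨v, hv⟩ : H) = 1 := by
        have := htriv (e ⟨v, hv⟩)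
        calc (⟨v, hv⟩ : H) = e.symm (e ⟨v, hv⟩) := (e.symm_apply_apply _).symm
          _ = e.symm 1 := by rw [this]
          _ = 1 := map_one _
      simpa using congrArg Subtype.val this
  · -- cyclic case: every element of FreeGroup X is a power of `of x`
    let φ : FreeGroup X →* Multiplicative ℤ :=
      FreeGroup.lift (fun _ => Multiplicative.ofAdd (1 : ℤ))
    let ψ : Multiplicative ℤ →* FreeGroup X := zpowersHom _ (FreeGroup.of x)
    have hretr : ψ.comp φ = MonoidHom.id _ := by
      apply FreeGroup.ext_hom
      intro z
      have hz : z = x := Subsingleton.elim z x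
      subst hz
      simp [φ, ψ, zpowersHom]
    have hpow : ∀ w : FreeGroup X, w = FreeGroup.of x ^ (Multiplicative.toAdd (φ w)) := by
      intro w
      have : ψ (φ w) = w := by
        calc ψ (φ w) = (ψ.comp φ) w := rfl
          _ = w := by rw [hretr]; rfl
      have hφx : φ (FreeGroup.of x) = Multiplicative.ofAdd 1 := FreeGroup.lift_apply_of
      rw [← this]
      simp [ψ, zpowersHom, hφx]
    refine ⟨((e.symm (FreeGroup.of x) : H) : FreeGroup β),
      Multiplicative.toAdd (φ (e ⟨u, hu⟩)), Multiplicative.toAdd (φ (e ⟨v, hv⟩)), ?_, ?_⟩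
    · have : (⟨u, hu⟩ : H) = (e.symm (FreeGroup.of x)) ^ (Multiplicative.toAdd (φ (e ⟨u, hu⟩))) := by
        conv_lhs => rw [← e.symm_apply_apply ⟨u, hu⟩, hpow (e ⟨u, hu⟩)]
        rw [map_zpow]
      simpa using congrArg Subtype.val this
    · have : (⟨v, hv⟩ : H) = (e.symm (FreeGroup.of x)) ^ (Multiplicative.toAdd (φ (e ⟨v, hv⟩))) := by
        conv_lhs => rw [← e.symm_apply_apply ⟨v, hv⟩, hpow (e ⟨v, hv⟩)]
        rw [map_zpow]
      simpa using congrArg Subtype.val this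



/-- Let `F = FreeGroup α` with `α` having two distinct elements, and let `H'`
be a finite-index subgroup of `H = ℤ × F`. Then `h = (z, f) ∈ H'` commutes with
every element of `H'` if and only if `f = 1`; that is, the center of `H'` is
`H' ∩ (ℤ × {1})`. -/
theorem center_of_finiteIndex_subgroup_eq {α : Type*} (a b : α) (hab : a ≠ b)
    (H' : Subgroup (Multiplicative ℤ × FreeGroup α)) (hfi : H'.index ≠ 0)
    (z : ℤ) (f : FreeGroup α) (hmem : (Multiplicative.ofAdd z, f) ∈ H') :
    (∀ x ∈ H', Commute (Multiplicative.ofAdd z, f) x) ↔ f = 1 := by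
  constructor
  · intro hc
    obtain ⟨ka, hka, -, hmemA⟩ :=
      Subgroup.exists_pow_mem_of_index_ne_zero hfi (1, FreeGroup.of a)
    obtain ⟨kb, hkb, -, hmemB⟩ :=
      Subgroup.exists_pow_mem_of_index_ne_zero hfi (1, FreeGroup.of b)
    have hA : Commute f (FreeGroup.of a ^ (ka : ℤ)) := by
      rw [zpow_natCast]
      exact congrArg Prod.snd (hc _ hmemA)
    have hB : Commute f (FreeGroup.of b ^ (kb : ℤ)) := by
      rw [zpow_natCast]
      exact congrArg Prod.snd (hc _ hmemB)
    obtain ⟨c, i, j, hfc, hac⟩ := commute_exists_zpow hA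
    obtain ⟨d, p, q, hfd, hbd⟩ := commute_exists_zpow hB
    have hfj : f ^ j = FreeGroup.of a ^ ((ka : ℤ) * i) := by
      rw [hfc, ← zpow_mul, mul_comm i j, zpow_mul, ← hac, ← zpow_mul]
    have hfq : f ^ q = FreeGroup.of b ^ ((kb : ℤ) * p) := by
      rw [hfd, ← zpow_mul, mul_comm p q, zpow_mul, ← hbd, ← zpow_mul]
    have hq0 : q ≠ 0 := by
      intro hq
      rw [hq, zpow_zero] at hbd
      have : (kb : ℤ) = 0 := of_zpow_eq_one hbd
      omega
    have hka0 : (ka : ℤ) ≠ 0 := by positivity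
    have key : FreeGroup.of a ^ ((ka : ℤ) * i * q) = FreeGroup.of b ^ ((kb : ℤ) * p * j) := by
      rw [zpow_mul, ← hfj, ← zpow_mul, mul_comm j q, zpow_mul, hfq, ← zpow_mul]
    have h0 : (ka : ℤ) * i * q = 0 := of_zpow_ne hab key
    have hi0 : i = 0 := by
      rcases mul_eq_zero.mp h0 with h | h
      · rcases mul_eq_zero.mp h with h | h
        · exact absurd h hka0
        · exact h
      · exact absurd h hq0
    rw [hfc, hi0, zpow_zero]
  · rintro rfl x hx
    rcases x with ⟨w, g⟩
    show (_ , _) * (_, _) = (_, _) * (_, _)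
    rw [Prod.mk_mul_mk, Prod.mk_mul_mk, mul_comm, one_mul, mul_one]
end

section
/- Let F = FreeGroup α be the free group on a type α having two distinct elements, let H = ℤ × F, and let H' be a finite-index subgroup of H. Set Z' = H' ∩ (ℤ × {1}). Then there exists a subgroup K of H with K ≤ H' such that K is a free group, Z' ⊓ K = ⊥, and Z' ⊔ K = H'. In particular, H' is the internal direct product of Z' and a free group (note every element of Z' is central in H, so Z' and K commute elementwise). -/
/-!
The projection `π : ℤ × F → F` restricts to a surjection `H' → π(H')` with kernel `Z'`. By
Nielsen–Schreier `π(H')` is free, so this surjection has a homomorphic section; its image `K` is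
free, and the image of a section is a complement to the kernel.
-/

universe u

namespace IsFreeGroup

theorem exists_leftInverse_of_surjective {G F : Type*} [Group G] [Group F] [IsFreeGroup F]
    {f : G →* F} (hf : Function.Surjective f) : ∃ s : F →* G, Function.LeftInverse f s := by
  choose g hg using fun x : Generators F => hf (of x)
  have hfg : f.comp (lift g) = MonoidHom.id F := ext_hom fun x => by simp [lift_of, hg]
  exact ⟨lift g, DFunLike.congr_fun hfg⟩

end IsFreeGroup

namespace MonoidHom

variable {G Q : Type*} [Group G] [Group Q] {f : G →* Q} {s : Q →* G}

theorem ker_inf_range_eq_bot_of_leftInverse (hs : Function.LeftInverse f s) :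
    f.ker ⊓ s.range = ⊥ := by
  rw [eq_bot_iff]
  rintro _ ⟨hker, q, rfl⟩
  have hq : q = 1 := hs q ▸ (mem_ker.mp hker)
  simp [hq]

theorem ker_sup_range_eq_top_of_leftInverse (hs : Function.LeftInverse f s) :
    f.ker ⊔ s.range = ⊤ := by
  rw [eq_top_iff]
  intro g _
  have hker : g * (s (f g))⁻¹ ∈ f.ker := by
    rw [mem_ker, map_mul, map_inv, hs, mul_inv_cancel]
  have hrange : s (f g) ∈ s.range := ⟨f g, rfl⟩
  simpa using Subgroup.mul_mem _ (Subgroup.mem_sup_left hker) (Subgroup.mem_sup_right hrange)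

end MonoidHom

namespace Subgroup

theorem exists_isFreeGroup_complement_inf_ker {G : Type*} {F : Type u} [Group G] [Group F]
    [IsFreeGroup F] (π : G →* F) (H : Subgroup G) :
    ∃ K : Subgroup G, K ≤ H ∧ IsFreeGroup K ∧ (H ⊓ π.ker) ⊓ K = ⊥ ∧ (H ⊓ π.ker) ⊔ K = H := by
  obtain ⟨s, hs⟩ := IsFreeGroup.exists_leftInverse_of_surjective (π.subgroupMap_surjective H)
  have hs_inj : Function.Injective (H.subtype.comp s) := H.subtype_injective.comp hs.injective
  have hker : (π.subgroupMap H).ker.map H.subtype = H ⊓ π.ker := by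
    rw [ker_subgroupMap, subgroupOf_map_subtype, inf_comm]
  refine ⟨(H.subtype.comp s).range, ?_, ?_, ?_, ?_⟩
  · rintro _ ⟨q, rfl⟩
    exact (s q).2
  · exact IsFreeGroup.ofMulEquiv (MonoidHom.ofInjective hs_inj)
  · rw [MonoidHom.range_comp, ← hker, ← map_inf_eq _ _ _ H.subtype_injective,
      MonoidHom.ker_inf_range_eq_bot_of_leftInverse hs, map_bot]
  · rw [MonoidHom.range_comp, ← hker, ← map_sup,
      MonoidHom.ker_sup_range_eq_top_of_leftInverse hs, ← MonoidHom.range_eq_map, range_subtype]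

end Subgroup

theorem finiteIndex_subgroup_internal_product_general {α : Type*}
    (H' : Subgroup (Multiplicative ℤ × FreeGroup α)) :
    ∃ K : Subgroup (Multiplicative ℤ × FreeGroup α),
      K ≤ H' ∧ IsFreeGroup K ∧
      (H' ⊓ Subgroup.prod (⊤ : Subgroup (Multiplicative ℤ))
        (⊥ : Subgroup (FreeGroup α))) ⊓ K = ⊥ ∧
      (H' ⊓ Subgroup.prod (⊤ : Subgroup (Multiplicative ℤ))
        (⊥ : Subgroup (FreeGroup α))) ⊔ K = H' := by
  rw [← MonoidHom.ker_snd]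
  exact H'.exists_isFreeGroup_complement_inf_ker (MonoidHom.snd _ _)

/-- Let `F = FreeGroup α` with `α` having two distinct elements, `H = ℤ × F`,
and `H'` a finite-index subgroup of `H`. Set `Z' = H' ∩ (ℤ × {1})`. Then there
is a subgroup `K ≤ H'` that is a free group with `Z' ⊓ K = ⊥` and
`Z' ⊔ K = H'`. -/
theorem finiteIndex_subgroup_internal_product {α : Type*} (a b : α) (hab : a ≠ b)
    (H' : Subgroup (Multiplicative ℤ × FreeGroup α)) (hfi : H'.index ≠ 0) :
    ∃ K : Subgroup (Multiplicative ℤ × FreeGroup α),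
      K ≤ H' ∧ IsFreeGroup K ∧
      (H' ⊓ Subgroup.prod (⊤ : Subgroup (Multiplicative ℤ))
        (⊥ : Subgroup (FreeGroup α))) ⊓ K = ⊥ ∧
      (H' ⊓ Subgroup.prod (⊤ : Subgroup (Multiplicative ℤ))
        (⊥ : Subgroup (FreeGroup α))) ⊔ K = H' :=
  finiteIndex_subgroup_internal_product_general H'
end

section
/- Let F = FreeGroup α be the free group on a type α having two distinct elements, let H = ℤ × F, and let H' be a finite-index subgroup of H. Suppose A and B are nontrivial subgroups of H with A ≤ H', B ≤ H', every element of A commuting with every element of B, A ⊓ B = ⊥, and A ⊔ B = H'. Then, after possibly interchanging A and B, the following hold: A = H' ∩ (ℤ × {1}); B ∩ (ℤ × {1}) = ⊥, so the projection homomorphism ℤ × F → F onto the second factor is injective on B; and the image of B under this projection is a finite-index subgroup of F. -/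
/-!
Free groups are commutative-transitive: if `y ≠ 1` commutes with `x` and `z`, then
`⟨x, y, z⟩` is free (Nielsen–Schreier) with nontrivial centre, so it has at most one
generator and is abelian. Hence if neither `A` nor `B` lay in `ℤ × {1}`, their images in `F`
would be commuting nontrivial subgroups generating an abelian group, namely the image of `H'`;
but a finite-index subgroup of `F` contains powers `aⁿ`, `bᵐ`, which do not commute.
So say `A ≤ ℤ × {1}`. Two nontrivial subgroups of `ℤ` meet, so `A ⊓ B = ⊥` forces
`B ∩ (ℤ × {1}) = 1`; writing elements of `H'` as `x y` with `x ∈ A`, `y ∈ B` then gives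
`H' ∩ (ℤ × {1}) = A`, and `H'` and `B` have the same image in `F`.
-/

namespace FreeGroup

variable {β : Type*}

theorem commute_mk_singleton {w : FreeGroup β} {r : β} (h : Commute w (of r)) (e : Bool) :
    Commute w (mk [(r, e)]) := by
  cases e
  · exact h.inv_right
  · exact h

theorem eq_one_of_commute_of_of {s t : β} (hst : s ≠ t) {w : FreeGroup β}
    (hs : Commute w (of s)) (ht : Commute w (of t)) : w = 1 := by
  classical
  by_contra hw
  have hL0 : w.toWord ≠ [] := by rwa [Ne, toWord_eq_nil_iff]
  obtain ⟨hd, tl, hcons⟩ := List.exists_cons_of_ne_nil hL0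
  obtain ⟨r, hr, hwr⟩ : ∃ r, r ≠ hd.1 ∧ Commute w (of r) := by
    by_cases h : s = hd.1
    · exact ⟨t, h ▸ hst.symm, ht⟩
    · exact ⟨s, h, hs⟩
  -- Appending `(r, e)` with `e` the sign of the last letter of `w` creates no cancellation.
  set x : β × Bool := (r, (w.toWord.getLast hL0).2)
  have hred_cons : IsReduced (x :: w.toWord) := by
    rw [hcons]
    exact List.IsChain.cons_cons (fun h => absurd h hr) (hcons ▸ isReduced_toWord)
  have hred_append : IsReduced (w.toWord ++ [x]) := by
    refine List.IsChain.append isReduced_toWord IsReduced.singleton fun a ha b hb => ?_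
    rw [List.getLast?_eq_some_getLast hL0, Option.mem_some_iff] at ha
    rw [List.head?_cons, Option.mem_some_iff] at hb
    subst ha hb
    exact fun _ => rfl
  have hmk : mk (w.toWord ++ [x]) = mk (x :: w.toWord) := by
    rw [← mul_mk, ← List.singleton_append (l := w.toWord), ← mul_mk, mk_toWord]
    exact (commute_mk_singleton hwr _).eq
  have hlist := hred_append.reduce_eq.symm.trans ((reduce.sound hmk).trans hred_cons.reduce_eq)
  rw [hcons, List.cons_append, List.cons.injEq] at hlist
  exact hr (congrArg Prod.fst hlist.1).symm

theorem commute_of_subsingleton [Subsingleton β] (x y : FreeGroup β) : Commute x y := by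
  have : IsMulCommutative (Subgroup.closure (Set.range (of : β → FreeGroup β))) :=
    Subgroup.isMulCommutative_closure <| by
      rintro _ ⟨s, rfl⟩ _ ⟨t, rfl⟩
      rw [Subsingleton.elim s t]
  rw [closure_range_of] at this
  exact setLike_mul_comm (Subgroup.mem_top x) (Subgroup.mem_top y)

end FreeGroup

def IsCommTransitive (G : Type*) [Group G] : Prop :=
  ∀ ⦃x y z : G⦄, y ≠ 1 → Commute x y → Commute y z → Commute x z

namespace IsFreeGroup

variable {G : Type*} [Group G] [IsFreeGroup G]

theorem commute_of_mem_center {c : G} (hc : c ∈ Subgroup.center G) (hc1 : c ≠ 1) (x y : G) :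
    Commute x y := by
  let e := toFreeGroup G
  by_cases hgen : Subsingleton (Generators G)
  · simpa using (FreeGroup.commute_of_subsingleton (e x) (e y)).map e.symm
  · obtain ⟨s, t, hst⟩ := not_subsingleton_iff_nontrivial.mp hgen |>.exists_pair_ne
    have hcomm (r : Generators G) : Commute (e c) (FreeGroup.of r) := by
      have : Commute c (e.symm (FreeGroup.of r)) := (Subgroup.mem_center_iff.mp hc _).symm
      simpa using this.map e
    exact (hc1 <| e.map_eq_one_iff.mp <|
      FreeGroup.eq_one_of_commute_of_of hst (hcomm s) (hcomm t)).elim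

theorem isCommTransitive : IsCommTransitive G := by
  intro x y z hy hxy hyz
  let K := Subgroup.closure ({x, y, z} : Set G)
  have mem {g : G} (hg : g ∈ ({x, y, z} : Set G)) : g ∈ K := Subgroup.subset_closure hg
  have hcent : (⟨y, mem (by simp)⟩ : K) ∈ Subgroup.center K := by
    refine Subgroup.mem_center_iff.mpr fun g => Subtype.ext ?_
    have : (g : G) ∈ Subgroup.centralizer {y} :=
      (Subgroup.closure_le _).mpr (by
        rintro w (rfl | rfl | rfl) <;>
          simp [Subgroup.mem_centralizer_singleton_iff, hxy.eq, hyz.eq]) g.2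
    exact Subgroup.mem_centralizer_singleton_iff.mp this
  simpa using (commute_of_mem_center hcent (by simpa using hy)
    ⟨x, mem (by simp)⟩ ⟨z, mem (by simp)⟩).map K.subtype

end IsFreeGroup

theorem IsCommTransitive.isMulCommutative_sup {G : Type*} [Group G] (hG : IsCommTransitive G)
    {A B : Subgroup G} (hcomm : ∀ x ∈ A, ∀ y ∈ B, Commute x y)
    (hA : A ≠ ⊥) (hB : B ≠ ⊥) :
    IsMulCommutative ↥(A ⊔ B) := by
  obtain ⟨a, ha, ha1⟩ := A.bot_or_exists_ne_one.resolve_left hA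
  obtain ⟨b, hb, hb1⟩ := B.bot_or_exists_ne_one.resolve_left hB
  rw [← Subgroup.closure_eq A, ← Subgroup.closure_eq B, ← Subgroup.closure_union]
  refine Subgroup.isMulCommutative_closure ?_
  rintro x (hx | hx) y (hy | hy)
  · exact hG hb1 (hcomm x hx b hb) (hcomm y hy b hb).symm
  · exact hcomm x hx y hy
  · exact (hcomm y hy x hx).symm
  · exact hG ha1 (hcomm a ha x hx).symm (hcomm a ha y hy)

namespace FreeGroup

variable {α : Type*} {a b : α}

theorem not_commute_of_pow_of_pow (hab : a ≠ b) {n m : ℕ} (hn : n ≠ 0) (hm : m ≠ 0) :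
    ¬ Commute (of a ^ n) (of b ^ m) := by
  intro h
  have hct : IsCommTransitive (FreeGroup α) := IsFreeGroup.isCommTransitive
  have hab' : Commute (of a) (of b) :=
    hct ((pow_eq_one_iff_right (of_ne_one b)).not.mpr hm)
      (hct ((pow_eq_one_iff_right (of_ne_one a)).not.mpr hn) (Commute.self_pow _ _) h)
      (Commute.pow_self _ _)
  exact of_ne_one a (eq_one_of_commute_of_of hab (Commute.refl _) hab')

theorem not_isMulCommutative_of_index_ne_zero (hab : a ≠ b) {K : Subgroup (FreeGroup α)}
    (hK : K.index ≠ 0) : ¬ IsMulCommutative K := by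
  intro _
  obtain ⟨n, hn, -, han⟩ := K.exists_pow_mem_of_index_ne_zero hK (of a)
  obtain ⟨m, hm, -, hbm⟩ := K.exists_pow_mem_of_index_ne_zero hK (of b)
  exact not_commute_of_pow_of_pow hab hn.ne' hm.ne' (setLike_mul_comm han hbm)

end FreeGroup

theorem Subgroup.sup_inf_eq_left_of_commute {G : Type*} [Group G] {A B N : Subgroup G}
    (hcomm : ∀ x ∈ A, ∀ y ∈ B, Commute x y) (hAN : A ≤ N) (hBN : B ⊓ N = ⊥) :
    (A ⊔ B) ⊓ N = A := by
  refine le_antisymm (fun h ⟨hAB, hN⟩ => ?_) (le_inf le_sup_left hAN)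
  have hnorm : A ≤ normalizer (B : Set G) := fun x hx =>
    centralizer_le_normalizer _ (mem_centralizer_iff.mpr fun y hy => (hcomm x hx y hy).symm.eq)
  obtain ⟨x, hx, y, hy, rfl⟩ :=
    Set.mem_mul.mp (coe_mul_of_left_le_normalizer_right A B hnorm ▸ SetLike.mem_coe.mpr hAB)
  have hyN : y ∈ N := by simpa using mul_mem (inv_mem (hAN hx)) hN
  have hy1 : y = 1 := mem_bot.mp (hBN ▸ ⟨hy, hyN⟩)
  simpa [hy1] using hx

section ProdInt

variable {G : Type*} [Group G]

-- For `x = (i, 1)` and `y = (j, 1)`, the element `x ^ j = y ^ i` lies in `A ⊓ B`.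
theorem inf_ne_bot_of_le_ker_snd {A B : Subgroup (Multiplicative ℤ × G)}
    (hAp : A ≤ (MonoidHom.snd (Multiplicative ℤ) G).ker)
    (hBp : B ≤ (MonoidHom.snd (Multiplicative ℤ) G).ker) (hA : A ≠ ⊥) (hB : B ≠ ⊥) :
    A ⊓ B ≠ ⊥ := by
  obtain ⟨x, hx, hx1⟩ := A.bot_or_exists_ne_one.resolve_left hA
  obtain ⟨y, hy, hy1⟩ := B.bot_or_exists_ne_one.resolve_left hB
  have hx2 : x.2 = 1 := hAp hx
  have hy2 : y.2 = 1 := hBp hy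
  have hx0 : x.1.toAdd ≠ 0 := fun h => hx1 (Prod.ext h hx2)
  have hy0 : y.1.toAdd ≠ 0 := fun h => hy1 (Prod.ext h hy2)
  have hxy : x ^ y.1.toAdd = y ^ x.1.toAdd := Prod.ext (by
    apply Multiplicative.toAdd.injective
    simp [mul_comm]) (by simp [hx2, hy2])
  intro h
  have hmem : x ^ y.1.toAdd ∈ A ⊓ B := ⟨zpow_mem hx _, hxy ▸ zpow_mem hy _⟩
  rw [h, Subgroup.mem_bot] at hmem
  have h0 : y.1.toAdd * x.1.toAdd = 0 := by simpa using congrArg (fun g => g.1.toAdd) hmem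
  exact mul_ne_zero hy0 hx0 h0

theorem index_map_snd_ne_zero {H : Subgroup (Multiplicative ℤ × G)} (hH : H.index ≠ 0) :
    (H.map (MonoidHom.snd (Multiplicative ℤ) G)).index ≠ 0 :=
  ne_zero_of_dvd_ne_zero hH (H.index_map_dvd Prod.snd_surjective)

theorem eq_inf_prod_bot_and_injOn_snd_of_le_ker_snd {H' A B : Subgroup (Multiplicative ℤ × G)}
    (hfi : H'.index ≠ 0) (hA : A ≠ ⊥) (hcomm : ∀ x ∈ A, ∀ y ∈ B, Commute x y)
    (hinf : A ⊓ B = ⊥) (hsup : A ⊔ B = H')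
    (hAp : A ≤ (MonoidHom.snd (Multiplicative ℤ) G).ker) :
    A = H' ⊓ Subgroup.prod ⊤ ⊥ ∧ B ⊓ Subgroup.prod ⊤ ⊥ = ⊥ ∧
      Set.InjOn (MonoidHom.snd (Multiplicative ℤ) G) (B : Set (Multiplicative ℤ × G)) ∧
      (B.map (MonoidHom.snd (Multiplicative ℤ) G)).index ≠ 0 := by
  rw [← MonoidHom.ker_snd]
  have hBp : B ⊓ (MonoidHom.snd (Multiplicative ℤ) G).ker = ⊥ := by
    by_contra h
    refine inf_ne_bot_of_le_ker_snd hAp inf_le_right hA h (eq_bot_iff.mpr ?_)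
    exact hinf ▸ inf_le_inf_left A inf_le_left
  refine ⟨(hsup ▸ Subgroup.sup_inf_eq_left_of_commute hcomm hAp hBp).symm, hBp,
    (Set.injOn_iff_map_eq_one _ _).mpr fun x hx hx1 =>
      Subgroup.mem_bot.mp (hBp ▸ ⟨hx, hx1⟩), ?_⟩
  have hmap : H'.map (MonoidHom.snd _ G) = B.map (MonoidHom.snd _ G) := by
    rw [← hsup, Subgroup.map_sup, (Subgroup.map_eq_bot_iff _).mpr hAp, bot_sup_eq]
  exact hmap ▸ index_map_snd_ne_zero hfi

end ProdInt

theorem le_ker_snd_or_le_ker_snd {α : Type*} {a b : α} (hab : a ≠ b)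
    {H' A B : Subgroup (Multiplicative ℤ × FreeGroup α)} (hfi : H'.index ≠ 0)
    (hcomm : ∀ x ∈ A, ∀ y ∈ B, Commute x y) (hsup : A ⊔ B = H') :
    A ≤ (MonoidHom.snd (Multiplicative ℤ) (FreeGroup α)).ker ∨
      B ≤ (MonoidHom.snd (Multiplicative ℤ) (FreeGroup α)).ker := by
  by_contra! h
  have hmap :
      ∀ x ∈ A.map (MonoidHom.snd _ _), ∀ y ∈ B.map (MonoidHom.snd _ _), Commute x y := by
    rintro _ ⟨x, hx, rfl⟩ _ ⟨y, hy, rfl⟩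
    exact (hcomm x hx y hy).map _
  have := IsFreeGroup.isCommTransitive.isMulCommutative_sup hmap
    (mt (Subgroup.map_eq_bot_iff _).mp h.1) (mt (Subgroup.map_eq_bot_iff _).mp h.2)
  rw [← Subgroup.map_sup, hsup] at this
  exact FreeGroup.not_isMulCommutative_of_index_ne_zero hab (index_map_snd_ne_zero hfi) this

theorem direct_factor_identification_general {α : Type*} (a b : α) (hab : a ≠ b)
    (H' A B : Subgroup (Multiplicative ℤ × FreeGroup α)) (hfi : H'.index ≠ 0)
    (hA : A ≠ ⊥) (hB : B ≠ ⊥)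
    (hcomm : ∀ x ∈ A, ∀ y ∈ B, Commute x y)
    (hinf : A ⊓ B = ⊥) (hsup : A ⊔ B = H') :
    (A = H' ⊓ Subgroup.prod (⊤ : Subgroup (Multiplicative ℤ))
        (⊥ : Subgroup (FreeGroup α)) ∧
      B ⊓ Subgroup.prod (⊤ : Subgroup (Multiplicative ℤ))
        (⊥ : Subgroup (FreeGroup α)) = ⊥ ∧
      Set.InjOn (MonoidHom.snd (Multiplicative ℤ) (FreeGroup α))
        (B : Set (Multiplicative ℤ × FreeGroup α)) ∧
      (Subgroup.map (MonoidHom.snd (Multiplicative ℤ) (FreeGroup α)) B).index ≠ 0) ∨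
    (B = H' ⊓ Subgroup.prod (⊤ : Subgroup (Multiplicative ℤ))
        (⊥ : Subgroup (FreeGroup α)) ∧
      A ⊓ Subgroup.prod (⊤ : Subgroup (Multiplicative ℤ))
        (⊥ : Subgroup (FreeGroup α)) = ⊥ ∧
      Set.InjOn (MonoidHom.snd (Multiplicative ℤ) (FreeGroup α))
        (A : Set (Multiplicative ℤ × FreeGroup α)) ∧
      (Subgroup.map (MonoidHom.snd (Multiplicative ℤ) (FreeGroup α)) A).index ≠ 0) := by
  rcases le_ker_snd_or_le_ker_snd hab hfi hcomm hsup with hAp | hBp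
  · exact .inl (eq_inf_prod_bot_and_injOn_snd_of_le_ker_snd hfi hA hcomm hinf hsup hAp)
  · exact .inr (eq_inf_prod_bot_and_injOn_snd_of_le_ker_snd hfi hB
      (fun y hy x hx => (hcomm x hx y hy).symm) (inf_comm A B ▸ hinf) (sup_comm A B ▸ hsup) hBp)

/-- In any internal direct product decomposition `H' = A × B` of a finite-index
subgroup `H'` of `ℤ × FreeGroup α` into two nontrivial factors, after possibly
interchanging `A` and `B`: `A = H' ∩ (ℤ × {1})`, `B` meets `ℤ × {1}` trivially
(so the projection onto the second factor is injective on `B`), and the image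
of `B` under that projection has finite index in `FreeGroup α`. -/
theorem direct_factor_identification {α : Type*} (a b : α) (hab : a ≠ b)
    (H' A B : Subgroup (Multiplicative ℤ × FreeGroup α)) (hfi : H'.index ≠ 0)
    (hA : A ≠ ⊥) (hB : B ≠ ⊥) (hAH : A ≤ H') (hBH : B ≤ H')
    (hcomm : ∀ x ∈ A, ∀ y ∈ B, Commute x y)
    (hinf : A ⊓ B = ⊥) (hsup : A ⊔ B = H') :
    (A = H' ⊓ Subgroup.prod (⊤ : Subgroup (Multiplicative ℤ))
        (⊥ : Subgroup (FreeGroup α)) ∧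
      B ⊓ Subgroup.prod (⊤ : Subgroup (Multiplicative ℤ))
        (⊥ : Subgroup (FreeGroup α)) = ⊥ ∧
      Set.InjOn (MonoidHom.snd (Multiplicative ℤ) (FreeGroup α))
        (B : Set (Multiplicative ℤ × FreeGroup α)) ∧
      (Subgroup.map (MonoidHom.snd (Multiplicative ℤ) (FreeGroup α)) B).index ≠ 0) ∨
    (B = H' ⊓ Subgroup.prod (⊤ : Subgroup (Multiplicative ℤ))
        (⊥ : Subgroup (FreeGroup α)) ∧
      A ⊓ Subgroup.prod (⊤ : Subgroup (Multiplicative ℤ))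
        (⊥ : Subgroup (FreeGroup α)) = ⊥ ∧
      Set.InjOn (MonoidHom.snd (Multiplicative ℤ) (FreeGroup α))
        (A : Set (Multiplicative ℤ × FreeGroup α)) ∧
      (Subgroup.map (MonoidHom.snd (Multiplicative ℤ) (FreeGroup α)) A).index ≠ 0) :=
  direct_factor_identification_general a b hab H' A B hfi hA hB hcomm hinf hsup
end

section
/- Let (Lᵢ)_{i ∈ ι} be a family of affine subspaces of the Euclidean plane EuclideanSpace ℝ (Fin 2), each of whose direction submodule has finrank 1 (i.e., each Lᵢ is an affine line). Assume the family of carrier sets (Lᵢ : Set (EuclideanSpace ℝ (Fin 2))) is locally finite, and that the lines are pairwise parallel (AffineSubspace.Parallel Lᵢ Lⱼ for all i, j). Then the complement of ⋃ᵢ Lᵢ contains a connected subset that is not bounded; in particular, the complement of the union has an unbounded connected component. -/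
open MeasureTheory

/-- Let `(Lᵢ)` be a locally finite family of pairwise parallel affine lines in
the Euclidean plane. Then the complement of their union contains an unbounded
connected subset. -/
theorem unbounded_component_of_parallel_lines {ι : Type*}
    (L : ι → AffineSubspace ℝ (EuclideanSpace ℝ (Fin 2)))
    (hline : ∀ i, Module.finrank ℝ (L i).direction = 1)
    (hlf : LocallyFinite fun i => ((L i : Set (EuclideanSpace ℝ (Fin 2)))))
    (hpar : ∀ i j, AffineSubspace.Parallel (L i) (L j)) :
    ∃ S : Set (EuclideanSpace ℝ (Fin 2)),
      S ⊆ (⋃ i, (L i : Set (EuclideanSpace ℝ (Fin 2))))ᶜ ∧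
      IsConnected S ∧ ¬ Bornology.IsBounded S := by
  cases isEmpty_or_nonempty ι with
  | inl h =>
    refine ⟨Set.univ, by simp, isConnected_univ, ?_⟩
    exact NormedSpace.unbounded_univ ℝ _
  | inr h =>
    -- each line is nonempty
    have hne : ∀ i, ((L i : Set (EuclideanSpace ℝ (Fin 2)))).Nonempty := by
      intro i
      rcases (L i).eq_bot_or_nonempty with hb | hb
      · exfalso
        have := hline i
        rw [hb, AffineSubspace.direction_bot] at this
        simpa using this
      · exact hb
    -- the index type is countable
    have hcount : Countable ι :=
      Set.countable_univ_iff.mp (hlf.countable_univ hne)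
    -- each line is a proper affine subspace
    have hne_top : ∀ i, L i ≠ ⊤ := by
      intro i hi
      have := hline i
      rw [hi, AffineSubspace.direction_top] at this
      have h2 : Module.finrank ℝ (EuclideanSpace ℝ (Fin 2)) = 2 := by
        simp [finrank_euclideanSpace]
      rw [finrank_top, h2] at this
      norm_num at this
    -- the union has measure zero, hence is not everything
    have hμ : volume (⋃ i, (L i : Set (EuclideanSpace ℝ (Fin 2)))) = 0 :=
      measure_iUnion_null fun i => Measure.addHaar_affineSubspace volume (L i) (hne_top i)
    have hne_univ : (⋃ i, (L i : Set (EuclideanSpace ℝ (Fin 2)))) ≠ Set.univ := by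
      intro hu
      rw [hu] at hμ
      exact MeasureTheory.Measure.measure_univ_ne_zero.mpr (NeZero.ne volume) hμ
    obtain ⟨x, hx⟩ := Set.ne_univ_iff_exists_notMem _ |>.mp hne_univ
    -- pick a direction vector
    obtain ⟨i₀⟩ := h
    have : Nontrivial (L i₀).direction := by
      apply Module.nontrivial_of_finrank_pos (R := ℝ)
      rw [hline i₀]; norm_num
    obtain ⟨v, hv0⟩ := exists_ne (0 : (L i₀).direction)
    refine ⟨Set.range (fun t : ℝ => t • (v : EuclideanSpace ℝ (Fin 2)) + x), ?_, ?_, ?_⟩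
    · rintro y ⟨t, rfl⟩ hy
      rcases Set.mem_iUnion.mp hy with ⟨j, hj⟩
      apply hx
      refine Set.mem_iUnion.mpr ⟨j, ?_⟩
      have hvj : (v : EuclideanSpace ℝ (Fin 2)) ∈ (L j).direction :=
        (hpar i₀ j).direction_eq ▸ v.2
      have hmem : (-t) • (v : EuclideanSpace ℝ (Fin 2)) +ᵥ (t • (v : EuclideanSpace ℝ (Fin 2)) + x) ∈ L j :=
        AffineSubspace.vadd_mem_of_mem_direction (Submodule.smul_mem _ _ hvj) hj
      have heq : (-t) • (v : EuclideanSpace ℝ (Fin 2)) +ᵥ (t • (v : EuclideanSpace ℝ (Fin 2)) + x) = x := by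
        rw [vadd_eq_add, ← add_assoc, ← add_smul, neg_add_cancel, zero_smul, zero_add]
      rwa [heq] at hmem
    · exact isConnected_range (by continuity)
    · intro hb
      obtain ⟨C, hC⟩ := hb.exists_norm_le
      have hv0' : (v : EuclideanSpace ℝ (Fin 2)) ≠ 0 :=
        fun h => hv0 (Subtype.ext h)
      have hvpos : 0 < ‖(v : EuclideanSpace ℝ (Fin 2))‖ := norm_pos_iff.mpr hv0'
      set t : ℝ := (C + ‖x‖ + 1) / ‖(v : EuclideanSpace ℝ (Fin 2))‖ with ht
      have hmem : t • (v : EuclideanSpace ℝ (Fin 2)) + x ∈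
          Set.range (fun t : ℝ => t • (v : EuclideanSpace ℝ (Fin 2)) + x) := ⟨t, rfl⟩
      have hle := hC _ hmem
      have h1 : ‖t • (v : EuclideanSpace ℝ (Fin 2))‖ ≤ C + ‖x‖ := by
        have hkey := norm_add_le (t • (v : EuclideanSpace ℝ (Fin 2)) + x) (-x)
        rw [add_neg_cancel_right, norm_neg] at hkey
        linarith
      have hCnn : 0 ≤ C :=
        le_trans (norm_nonneg _) (hC x ⟨0, by simp⟩)
      have htpos : 0 < t := by positivity
      have : ‖t • (v : EuclideanSpace ℝ (Fin 2))‖ = C + ‖x‖ + 1 := by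
        rw [norm_smul, Real.norm_eq_abs, abs_of_pos htpos, ht,
          div_mul_cancel₀ _ hvpos.ne']
      rw [this] at h1
      linarith
end

section
/- Fix an integer m ≥ 1 and a symmetric relation c : ℤ → ℤ → Prop satisfying: (periodicity) for all i, j, c i j ↔ c (i + m) (j + m); (separation) for every i ∈ ℤ and every nonzero k ∈ ℤ, ¬ c i (i + k*m); (interval property) for all i < j < k, if c i k then c i j or c j k. Then at least one of the following holds: (1) there exists R ≥ 0 such that c i j implies |i − j| ≤ R; or (2) there exist nonempty sets A, B ⊆ ℤ with A ∪ B = ℤ and A ∩ B = ∅, each invariant under translation by m (i ∈ A ↔ i + m ∈ A), such that whenever i ∈ A, j ∈ B, and i < j, then c i j. -/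
/-!
Translating by `m` and applying the interval property to `i < i + m < j` (where `c i (i + m)`
is excluded by separation) shows that a crossing `c i j` with `i < j` forces `c i' j'` for all
`i' ≡ i`, `j' ≡ j` with `0 < j' - i' ≤ j - i`. Hence, for two residue classes, either every
member of the first crosses every later member of the second, or the crossing gaps between
them are bounded. If the second happens for all of the finitely many pairs of classes,
crossings are uniformly bounded. Otherwise some class `t` is crossed by all earlier members of
some class, and the classes with this property form the half-plane `A`.
-/

/-- The residue classes of `r` and `t` mod `m` stand for the `⟨g^m⟩`-orbits of the `r`-th and
`t`-th hyperplanes. -/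
def OrbitsCross (c : ℤ → ℤ → Prop) (m r t : ℤ) : Prop :=
  ∀ i j, i ≡ r [ZMOD m] → j ≡ t [ZMOD m] → i < j → c i j

section

variable {c : ℤ → ℤ → Prop} {m : ℤ}

theorem crosses_add_mul_iff (hper : ∀ i j, c i j ↔ c (i + m) (j + m)) (u i j : ℤ) :
    c (i + u * m) (j + u * m) ↔ c i j := by
  induction u using Int.induction_on generalizing i j with
  | zero => simp
  | succ n ih => rw [hper i j, ← ih (i + m) (j + m)]; ring_nf
  | pred n ih => rw [← ih i j, hper (i + (-n - 1) * m)]; ring_nf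

theorem crosses_add_mul_of_crosses (hm : 0 < m)
    (hsep : ∀ i k : ℤ, k ≠ 0 → ¬ c i (i + k * m))
    (hint : ∀ i j k : ℤ, i < j → j < k → c i k → c i j ∨ c j k)
    {i j : ℤ} (hc : c i j) (n : ℤ) (hn : 0 ≤ n) (hlt : i + n * m < j) :
    c (i + n * m) j := by
  induction n, hn using Int.leInduction with
  | base => simpa using hc
  | succ n _ ih =>
    have hstep : i + n * m < i + (n + 1) * m := by linarith
    have hcross := ih (by linarith)
    refine (hint _ _ _ hstep hlt hcross).resolve_left ?_
    simpa [add_mul, add_assoc] using hsep (i + n * m) 1 one_ne_zero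

theorem crosses_of_modEq_of_sub_le (hm : 0 < m)
    (hper : ∀ i j, c i j ↔ c (i + m) (j + m))
    (hsep : ∀ i k : ℤ, k ≠ 0 → ¬ c i (i + k * m))
    (hint : ∀ i j k : ℤ, i < j → j < k → c i k → c i j ∨ c j k)
    {i j i' j' : ℤ} (hc : c i j) (hi : i ≡ i' [ZMOD m]) (hj : j ≡ j' [ZMOD m])
    (hlt : i' < j') (hgap : j' - i' ≤ j - i) : c i' j' := by
  obtain ⟨e, rfl⟩ := Int.modEq_iff_add_fac.mp hi
  obtain ⟨d, rfl⟩ := Int.modEq_iff_add_fac.mp hj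
  have hde : 0 ≤ e - d := by nlinarith
  have hshift := crosses_add_mul_of_crosses hm hsep hint hc (e - d) hde (by nlinarith)
  rw [← crosses_add_mul_iff hper d] at hshift
  convert hshift using 1 <;> ring

theorem exists_gap_bound_of_not_orbitsCross (hm : 0 < m)
    (hper : ∀ i j, c i j ↔ c (i + m) (j + m))
    (hsep : ∀ i k : ℤ, k ≠ 0 → ¬ c i (i + k * m))
    (hint : ∀ i j k : ℤ, i < j → j < k → c i k → c i j ∨ c j k)
    {r t : ℤ} (h : ¬ OrbitsCross c m r t) :
    ∃ g, ∀ i j, i ≡ r [ZMOD m] → j ≡ t [ZMOD m] → i < j → c i j → j - i < g := by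
  simp only [OrbitsCross, not_forall] at h
  obtain ⟨i₀, j₀, hi₀, hj₀, hlt₀, hnc⟩ := h
  refine ⟨j₀ - i₀, fun i j hi hj _ hc => ?_⟩
  by_contra! hgap
  exact hnc (crosses_of_modEq_of_sub_le hm hper hsep hint hc (hi.trans hi₀.symm)
    (hj.trans hj₀.symm) hlt₀ hgap)

theorem bounded_crossing_of_forall_not_orbitsCross (hm : 0 < m)
    (hsymm : ∀ i j, c i j → c j i)
    (hper : ∀ i j, c i j ↔ c (i + m) (j + m))
    (hsep : ∀ i k : ℤ, k ≠ 0 → ¬ c i (i + k * m))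
    (hint : ∀ i j k : ℤ, i < j → j < k → c i k → c i j ∨ c j k)
    (h : ∀ r t, ¬ OrbitsCross c m r t) :
    ∃ R : ℤ, 0 ≤ R ∧ ∀ i j, c i j → |i - j| ≤ R := by
  choose g hg using fun r t => exists_gap_bound_of_not_orbitsCross hm hper hsep hint (h r t)
  obtain ⟨R, hR⟩ := ((Finset.Ico 0 m ×ˢ Finset.Ico 0 m).image fun p => g p.1 p.2).bddAbove
  -- only the residues `0 ≤ r < m` matter, so finitely many gap bounds suffice
  have hbound : ∀ i j, i < j → c i j → j - i ≤ R := by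
    intro i j hij hc
    have hgR : g (i % m) (j % m) ≤ R := hR <| Finset.mem_coe.mpr <|
      Finset.mem_image_of_mem (fun p => g p.1 p.2) <| Finset.mk_mem_product
        (Finset.mem_Ico.mpr ⟨Int.emod_nonneg i hm.ne', Int.emod_lt_of_pos i hm⟩)
        (Finset.mem_Ico.mpr ⟨Int.emod_nonneg j hm.ne', Int.emod_lt_of_pos j hm⟩)
    have hgap := hg (i % m) (j % m) i j (Int.mod_modEq i m).symm (Int.mod_modEq j m).symm hij hc
    omega
  refine ⟨max R 0, le_max_right R 0, fun i j hc => ?_⟩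
  rcases lt_trichotomy i j with hij | rfl | hji
  · have := hbound i j hij hc
    rw [abs_sub_comm, abs_of_pos (sub_pos.mpr hij)]
    exact this.trans (le_max_left R 0)
  · simp
  · have := hbound j i hji (hsymm i j hc)
    rw [abs_of_pos (sub_pos.mpr hji)]
    exact this.trans (le_max_left R 0)

theorem orbitsCross_congr_left {r r' : ℤ} (h : r ≡ r' [ZMOD m]) (t : ℤ) :
    OrbitsCross c m r t ↔ OrbitsCross c m r' t :=
  ⟨fun hr i j hi => hr i j (hi.trans h.symm), fun hr' i j hi => hr' i j (hi.trans h)⟩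

theorem not_orbitsCross_self (hm : 0 < m) (hsep : ∀ i k : ℤ, k ≠ 0 → ¬ c i (i + k * m))
    (t : ℤ) : ¬ OrbitsCross c m t t := fun h =>
  hsep t 1 one_ne_zero <| by
    simpa using h t (t + m) rfl Int.add_modEq_right (by linarith)

theorem orbitsCross_of_not_orbitsCross (hper : ∀ i j, c i j ↔ c (i + m) (j + m))
    (hint : ∀ i j k : ℤ, i < j → j < k → c i k → c i j ∨ c j k)
    {r s t : ℤ} (hrt : OrbitsCross c m r t) (hrs : ¬ OrbitsCross c m r s) :
    OrbitsCross c m s t := by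
  simp only [OrbitsCross, not_forall] at hrs
  obtain ⟨i₀, j₀, hi₀, hj₀, hlt₀, hnc⟩ := hrs
  intro j k hj hk hjk
  obtain ⟨d, rfl⟩ := Int.modEq_iff_add_fac.mp (hj₀.trans hj.symm)
  -- translate the non-crossing witness `(i₀, j₀)` so that it ends at `j₀ + m * d`
  have hnc' : ¬ c (i₀ + m * d) (j₀ + m * d) := by
    rwa [mul_comm m d, crosses_add_mul_iff hper]
  have hik : c (i₀ + m * d) k :=
    hrt _ k (Int.add_modulus_mul_modEq_iff.mpr hi₀) hk (by linarith)
  exact (hint _ _ _ (by linarith) hjk hik).resolve_left hnc'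

theorem exists_halfplane_of_orbitsCross (hm : 0 < m)
    (hper : ∀ i j, c i j ↔ c (i + m) (j + m))
    (hsep : ∀ i k : ℤ, k ≠ 0 → ¬ c i (i + k * m))
    (hint : ∀ i j k : ℤ, i < j → j < k → c i k → c i j ∨ c j k)
    {r t : ℤ} (hrt : OrbitsCross c m r t) :
    ∃ A B : Set ℤ, A.Nonempty ∧ B.Nonempty ∧ A ∪ B = Set.univ ∧ A ∩ B = ∅ ∧
      (∀ i, i ∈ A ↔ i + m ∈ A) ∧ (∀ i, i ∈ B ↔ i + m ∈ B) ∧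
      (∀ i ∈ A, ∀ j ∈ B, i < j → c i j) := by
  refine ⟨{i | OrbitsCross c m i t}, {i | OrbitsCross c m i t}ᶜ, ⟨r, hrt⟩,
    ⟨t, not_orbitsCross_self hm hsep t⟩, Set.union_compl_self _, Set.inter_compl_self _,
    fun i => orbitsCross_congr_left Int.add_modEq_right.symm t,
    fun i => not_congr (orbitsCross_congr_left Int.add_modEq_right.symm t), ?_⟩
  intro i hi j hj hij
  by_contra hnc
  exact hj <| orbitsCross_of_not_orbitsCross hper hint hi fun hij' => hnc (hij' i j rfl rfl hij)

end

/-- Combinatorial abstraction of Lemma 3.4: for a symmetric, `m`-periodic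
crossing relation `c` on `ℤ` with the separation and interval properties,
either crossings happen at uniformly bounded distance, or `ℤ` splits into two
disjoint nonempty `m`-invariant sets `A`, `B` with `c i j` whenever
`i ∈ A`, `j ∈ B`, `i < j`. -/
theorem halfplane_or_bounded_crossing (m : ℤ) (hm : 1 ≤ m) (c : ℤ → ℤ → Prop)
    (hsymm : ∀ i j, c i j → c j i)
    (hper : ∀ i j, c i j ↔ c (i + m) (j + m))
    (hsep : ∀ i : ℤ, ∀ k : ℤ, k ≠ 0 → ¬ c i (i + k * m))
    (hint : ∀ i j k : ℤ, i < j → j < k → c i k → c i j ∨ c j k) :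
    (∃ R : ℤ, 0 ≤ R ∧ ∀ i j, c i j → |i - j| ≤ R) ∨
    (∃ A B : Set ℤ, A.Nonempty ∧ B.Nonempty ∧ A ∪ B = Set.univ ∧ A ∩ B = ∅ ∧
      (∀ i, i ∈ A ↔ i + m ∈ A) ∧ (∀ i, i ∈ B ↔ i + m ∈ B) ∧
      (∀ i ∈ A, ∀ j ∈ B, i < j → c i j)) := by
  have hm : 0 < m := hm
  by_cases h : ∃ r t, OrbitsCross c m r t
  · obtain ⟨r, t, hrt⟩ := h
    exact Or.inr (exists_halfplane_of_orbitsCross hm hper hsep hint hrt)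
  · push Not at h
    exact Or.inl (bounded_crossing_of_forall_not_orbitsCross hm hsymm hper hsep hint h)
end

section
/- Fix an integer m ≥ 1 and a symmetric relation c : ℤ → ℤ → Prop satisfying: (periodicity) for all i, j, c i j ↔ c (i + m) (j + m); (separation) for every i ∈ ℤ and every nonzero k ∈ ℤ, ¬ c i (i + k*m); (interval property) for all i < j < k, if c i k then c i j or c j k. Suppose that for every R ≥ 0 there exist i < j with c i j and j − i > R. Then there exist integers a < b with the property that c (a − m*i) (b + m*j) holds for all natural numbers i, j ≥ 0. -/
/-!
Reduce every crossing `c i j` by a multiple of `m` so that `0 ≤ i < m`. Since crossings of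
unbounded length exist and there are only finitely many residues mod `m`, there are
`0 ≤ r < m` and a residue class of `j` containing arbitrarily long crossings `c r j`. For `j`
in that class beyond `r`, pick a longer crossing `c r j'` in the same class: the interval
property gives `c r j` or `c j j'`, and separation rules out the latter. Translating by
multiples of `m` turns these crossings into the required family.
-/

open Filter

section Periodic

variable {α : Type*} [AddGroup α] {m : α} {c : α → α → Prop}

theorem rel_add_zsmul_iff (hper : ∀ i j, c i j ↔ c (i + m) (j + m)) (n : ℤ) (i j : α) :
    c (i + n • m) (j + n • m) ↔ c i j := by
  have hP : Function.Periodic (fun p : α × α => c p.1 p.2) (m, m) :=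
    fun p => propext (hper p.1 p.2).symm
  simpa using Iff.of_eq (hP.zsmul n (i, j))

end Periodic

namespace Int

theorem exists_frequently_and_modEq {m : ℤ} (hm : 0 < m) {p : ℤ → Prop}
    (h : ∃ᶠ j in atTop, p j) : ∃ s, ∃ᶠ j in atTop, p j ∧ j ≡ s [ZMOD m] := by
  have hres : ∃ᶠ j in atTop, ∃ s ∈ Finset.Ico 0 m, p j ∧ j ≡ s [ZMOD m] :=
    h.mono fun j hj => ⟨j % m, Finset.mem_Ico.2 ⟨emod_nonneg j hm.ne', emod_lt_of_pos j hm⟩,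
      hj, (mod_modEq j m).symm⟩
  obtain ⟨s, -, hs⟩ := frequently_exists_finset _ |>.1 hres
  exact ⟨s, hs⟩

end Int

section Crossings

variable {m : ℤ} {c : ℤ → ℤ → Prop}

theorem frequently_exists_crossing_from_Ico (hm : 0 < m)
    (hper : ∀ i j, c i j ↔ c (i + m) (j + m))
    (hbig : ∀ R : ℤ, 0 ≤ R → ∃ i j : ℤ, i < j ∧ c i j ∧ j - i > R) :
    ∃ᶠ j in atTop, ∃ r ∈ Finset.Ico 0 m, c r j := by
  refine frequently_atTop.2 fun R => ?_
  obtain ⟨i, j, -, hij, hlong⟩ := hbig (max R 0) (le_max_right _ _)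
  have hdiv := Int.mul_ediv_add_emod i m
  have hres := Int.emod_nonneg i hm.ne'
  refine ⟨j - (i / m) * m, by linarith [le_max_left R 0], i % m,
    Finset.mem_Ico.2 ⟨hres, Int.emod_lt_of_pos i hm⟩, ?_⟩
  rw [← rel_add_zsmul_iff hper (-(i / m))] at hij
  convert hij using 2 <;> simp only [smul_eq_mul] <;> linarith

theorem crossing_of_frequently_modEq (hsep : ∀ i : ℤ, ∀ k : ℤ, k ≠ 0 → ¬ c i (i + k * m))
    (hint : ∀ i j k : ℤ, i < j → j < k → c i k → c i j ∨ c j k) {r s j : ℤ}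
    (hfreq : ∃ᶠ x in atTop, c r x ∧ x ≡ s [ZMOD m]) (hrj : r < j) (hjs : j ≡ s [ZMOD m]) :
    c r j := by
  obtain ⟨j', ⟨hcj', hj's⟩, hjj'⟩ := (hfreq.and_eventually (eventually_gt_atTop j)).exists
  obtain ⟨k, hk⟩ := (hjs.trans hj's.symm).dvd
  refine (hint r j j' hrj hjj' hcj').resolve_right fun hcjj' => hsep j k ?_ ?_
  · rintro rfl
    omega
  · rwa [show j + k * m = j' by linarith]

end Crossings

theorem exists_crossing_pair_general (m : ℤ) (hm : 1 ≤ m) (c : ℤ → ℤ → Prop)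
    (hper : ∀ i j, c i j ↔ c (i + m) (j + m))
    (hsep : ∀ i : ℤ, ∀ k : ℤ, k ≠ 0 → ¬ c i (i + k * m))
    (hint : ∀ i j k : ℤ, i < j → j < k → c i k → c i j ∨ c j k)
    (hbig : ∀ R : ℤ, 0 ≤ R → ∃ i j : ℤ, i < j ∧ c i j ∧ j - i > R) :
    ∃ a b : ℤ, a < b ∧ ∀ i j : ℕ, c (a - m * (i : ℤ)) (b + m * (j : ℤ)) := by
  have hm_pos : 0 < m := hm
  obtain ⟨r, -, hr⟩ :=
    frequently_exists_finset _ |>.1 (frequently_exists_crossing_from_Ico hm_pos hper hbig)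
  obtain ⟨s, hs⟩ := Int.exists_frequently_and_modEq hm_pos hr
  obtain ⟨b, ⟨-, hbs⟩, hrb⟩ := (hs.and_eventually (eventually_gt_atTop r)).exists
  refine ⟨r, b, hrb, fun i j => ?_⟩
  have hfar : c r (b + m * (i + j : ℤ)) :=
    crossing_of_frequently_modEq hsep hint hs (by nlinarith) (Int.modEq_add_fac_self.trans hbs)
  rw [← rel_add_zsmul_iff hper (-(i : ℤ))] at hfar
  convert hfar using 1 <;> rw [smul_eq_mul] <;> ring

/-- Combinatorial abstraction of an intermediate step in Lemma 3.4: if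
crossings of the relation `c` occur at arbitrarily large distance, then there
exist `a < b` with `c (a - m*i) (b + m*j)` for all natural numbers `i, j`. -/
theorem exists_crossing_pair (m : ℤ) (hm : 1 ≤ m) (c : ℤ → ℤ → Prop)
    (hsymm : ∀ i j, c i j → c j i)
    (hper : ∀ i j, c i j ↔ c (i + m) (j + m))
    (hsep : ∀ i : ℤ, ∀ k : ℤ, k ≠ 0 → ¬ c i (i + k * m))
    (hint : ∀ i j k : ℤ, i < j → j < k → c i k → c i j ∨ c j k)
    (hbig : ∀ R : ℤ, 0 ≤ R → ∃ i j : ℤ, i < j ∧ c i j ∧ j - i > R) :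
    ∃ a b : ℤ, a < b ∧ ∀ i j : ℕ, c (a - m * (i : ℤ)) (b + m * (j : ℤ)) :=
  exists_crossing_pair_general m hm c hper hsep hint hbig
end
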